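/- (Matrix inequality underlying Lemma 2.3: comparison of the Pucci operator with a multiple of the identity, with equality case.) Let k be a positive integer, fix real constants a, A with 0 < a ≤ A, let P be a k×k real symmetric matrix and let ζ ∈ ℝ. If P − ζ·I is positive semidefinite, then m⁺(P) ≥ k·m⁺(ζ) and m⁺(−P) ≤ k·m⁺(−ζ). Moreover, if m⁺(P) = k·m⁺(ζ) or m⁺(−P) = k·m⁺(−ζ), then P = ζ·I. -/

import Mathlib

open Matrix

/-- The scalar Pucci function `m⁺` with ellipticity constants `0 < a ≤ A`:
`m⁺(x) = A·x` for `x ≥ 0` and `m⁺(x) = a·x` for `x ≤ 0`. -/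
noncomputable def mplus (a A x : ℝ) : ℝ := if 0 ≤ x then A * x else a * x

/-- The Pucci function on real symmetric matrices: the sum of `m⁺` over the
eigenvalues (listed with multiplicity). -/
noncomputable def mplusMat (a A : ℝ) {ι : Type} [Fintype ι] [DecidableEq ι]
    (P : Matrix ι ι ℝ) (hP : P.IsHermitian) : ℝ :=
  ∑ i, mplus a A (hP.eigenvalues i)

/-! The Loewner order bound `P ≥ ζ·I` says exactly that every eigenvalue of `P` is at least `ζ`
(and `-P ≤ -ζ·I` that every eigenvalue of `-P` is at most `-ζ`). Since `m⁺` is strictly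
increasing, summing it over the eigenvalues gives the inequalities, and equality forces every
eigenvalue to equal `ζ`, i.e. `P = ζ·I`. -/

section Pucci

variable {a A : ℝ}

lemma mplus_monotone (ha : 0 ≤ a) (hA : 0 ≤ A) : Monotone (mplus a A) := by
  intro x y hxy
  unfold mplus
  split_ifs with hx hy hy
  · exact mul_le_mul_of_nonneg_left hxy hA
  · linarith
  · nlinarith
  · exact mul_le_mul_of_nonneg_left hxy ha

lemma mplus_strictMono (ha : 0 < a) (hA : 0 < A) : StrictMono (mplus a A) := by
  intro x y hxy
  unfold mplus
  split_ifs with hx hy hy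
  · exact mul_lt_mul_of_pos_left hxy hA
  · linarith
  · nlinarith
  · exact mul_lt_mul_of_pos_left hxy ha

end Pucci

namespace Matrix.IsHermitian

open scoped MatrixOrder ComplexOrder

variable {𝕜 ι : Type*} [RCLike 𝕜] [Fintype ι] [DecidableEq ι] {M : Matrix ι ι 𝕜}

lemma posSemidef_sub_smul_one_iff (hM : M.IsHermitian) (c : ℝ) :
    (M - c • (1 : Matrix ι ι 𝕜)).PosSemidef ↔ ∀ i, c ≤ hM.eigenvalues i := by
  rw [← le_iff, ← Algebra.algebraMap_eq_smul_one, algebraMap_le_iff_le_spectrum hM.isSelfAdjoint,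
    hM.spectrum_real_eq_range_eigenvalues, Set.forall_mem_range]

lemma posSemidef_smul_one_sub_iff (hM : M.IsHermitian) (c : ℝ) :
    (c • (1 : Matrix ι ι 𝕜) - M).PosSemidef ↔ ∀ i, hM.eigenvalues i ≤ c := by
  rw [← le_iff, ← Algebra.algebraMap_eq_smul_one, le_algebraMap_iff_spectrum_le hM.isSelfAdjoint,
    hM.spectrum_real_eq_range_eigenvalues, Set.forall_mem_range]

lemma eq_smul_one_of_eigenvalues_eq (hM : M.IsHermitian) {c : ℝ}
    (h : ∀ i, hM.eigenvalues i = c) : M = c • (1 : Matrix ι ι 𝕜) :=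
  le_antisymm (le_iff.2 <| (hM.posSemidef_smul_one_sub_iff c).2 fun i => (h i).le)
    (le_iff.2 <| (hM.posSemidef_sub_smul_one_iff c).2 fun i => (h i).ge)

end Matrix.IsHermitian

section PucciMatrix

variable {a A : ℝ} {ι : Type} [Fintype ι] [DecidableEq ι] {M : Matrix ι ι ℝ} {c : ℝ}

lemma card_mul_mplus_le_mplusMat (ha : 0 ≤ a) (hA : 0 ≤ A) (hM : M.IsHermitian)
    (h : (M - c • (1 : Matrix ι ι ℝ)).PosSemidef) :
    Fintype.card ι * mplus a A c ≤ mplusMat a A M hM := by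
  calc (Fintype.card ι : ℝ) * mplus a A c = ∑ _i : ι, mplus a A c := by simp
    _ ≤ mplusMat a A M hM := Finset.sum_le_sum fun i _ =>
      mplus_monotone ha hA ((hM.posSemidef_sub_smul_one_iff c).1 h i)

lemma mplusMat_le_card_mul_mplus (ha : 0 ≤ a) (hA : 0 ≤ A) (hM : M.IsHermitian)
    (h : (c • (1 : Matrix ι ι ℝ) - M).PosSemidef) :
    mplusMat a A M hM ≤ Fintype.card ι * mplus a A c := by
  calc mplusMat a A M hM ≤ ∑ _i : ι, mplus a A c := Finset.sum_le_sum fun i _ =>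
        mplus_monotone ha hA ((hM.posSemidef_smul_one_sub_iff c).1 h i)
    _ = Fintype.card ι * mplus a A c := by simp

lemma eq_smul_one_of_mplusMat_eq_of_posSemidef_sub (ha : 0 < a) (hA : 0 < A)
    (hM : M.IsHermitian) (h : (M - c • (1 : Matrix ι ι ℝ)).PosSemidef)
    (heq : mplusMat a A M hM = Fintype.card ι * mplus a A c) : M = c • 1 := by
  have hf := mplus_strictMono ha hA
  have hle := (hM.posSemidef_sub_smul_one_iff c).1 h
  have hsum : ∑ _i : ι, mplus a A c = ∑ i, mplus a A (hM.eigenvalues i) := by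
    simpa [mplusMat] using heq.symm
  refine hM.eq_smul_one_of_eigenvalues_eq fun i => (hf.injective ?_).symm
  exact (Finset.sum_eq_sum_iff_of_le fun i _ => hf.monotone (hle i)).1 hsum i (Finset.mem_univ i)

lemma eq_smul_one_of_mplusMat_eq_of_posSemidef_smul_one_sub (ha : 0 < a) (hA : 0 < A)
    (hM : M.IsHermitian) (h : (c • (1 : Matrix ι ι ℝ) - M).PosSemidef)
    (heq : mplusMat a A M hM = Fintype.card ι * mplus a A c) : M = c • 1 := by
  have hf := mplus_strictMono ha hA
  have hle := (hM.posSemidef_smul_one_sub_iff c).1 h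
  have hsum : ∑ i, mplus a A (hM.eigenvalues i) = ∑ _i : ι, mplus a A c := by
    simpa [mplusMat] using heq
  refine hM.eq_smul_one_of_eigenvalues_eq fun i => hf.injective ?_
  exact (Finset.sum_eq_sum_iff_of_le fun i _ => hf.monotone (hle i)).1 hsum i (Finset.mem_univ i)

end PucciMatrix

theorem pucci_comparison_with_multiple_of_identity_general
    (k : ℕ) (a A : ℝ) (ha : 0 < a) (haA : a ≤ A)
    (P : Matrix (Fin k) (Fin k) ℝ) (hP : P.IsHermitian) (ζ : ℝ)
    (hPζ : (P - ζ • (1 : Matrix (Fin k) (Fin k) ℝ)).PosSemidef) :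
    (k : ℝ) * mplus a A ζ ≤ mplusMat a A P hP ∧
    mplusMat a A (-P) hP.neg ≤ (k : ℝ) * mplus a A (-ζ) ∧
    ((mplusMat a A P hP = (k : ℝ) * mplus a A ζ ∨
        mplusMat a A (-P) hP.neg = (k : ℝ) * mplus a A (-ζ)) →
      P = ζ • (1 : Matrix (Fin k) (Fin k) ℝ)) := by
  have hA : 0 < A := ha.trans_le haA
  have hnegPζ : ((-ζ) • (1 : Matrix (Fin k) (Fin k) ℝ) - -P).PosSemidef := by
    rwa [neg_smul, sub_neg_eq_add, neg_add_eq_sub]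
  refine ⟨by simpa using card_mul_mplus_le_mplusMat ha.le hA.le hP hPζ,
    by simpa using mplusMat_le_card_mul_mplus ha.le hA.le hP.neg hnegPζ, ?_⟩
  rintro (heq | heq)
  · exact eq_smul_one_of_mplusMat_eq_of_posSemidef_sub ha hA hP hPζ (by simpa using heq)
  · simpa using eq_smul_one_of_mplusMat_eq_of_posSemidef_smul_one_sub ha hA hP.neg hnegPζ
      (by simpa using heq)

/-- Matrix inequality underlying Lemma 2.3: if `P - ζ·I` is positive semidefinite,
then `m⁺(P) ≥ k·m⁺(ζ)` and `m⁺(-P) ≤ k·m⁺(-ζ)`, with equality in either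
forcing `P = ζ·I`. -/
theorem pucci_comparison_with_multiple_of_identity
    (k : ℕ) (hk : 0 < k) (a A : ℝ) (ha : 0 < a) (haA : a ≤ A)
    (P : Matrix (Fin k) (Fin k) ℝ) (hP : P.IsHermitian) (ζ : ℝ)
    (hPζ : (P - ζ • (1 : Matrix (Fin k) (Fin k) ℝ)).PosSemidef) :
    (k : ℝ) * mplus a A ζ ≤ mplusMat a A P hP ∧
    mplusMat a A (-P) hP.neg ≤ (k : ℝ) * mplus a A (-ζ) ∧
    ((mplusMat a A P hP = (k : ℝ) * mplus a A ζ ∨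
        mplusMat a A (-P) hP.neg = (k : ℝ) * mplus a A (-ζ)) →
      P = ζ • (1 : Matrix (Fin k) (Fin k) ℝ)) :=
  pucci_comparison_with_multiple_of_identity_general k a A ha haA P hP ζ hPζ
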